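/- Let X be a real normed space, Y a real Banach space, and ψ : X × X → [0, ∞) a function such that the series ∑_{i=0}^∞ ψ(0, 2^i x)/2^i converges for all x in X and lim_{n→∞} ψ(2^n x, 2^n y)/2^n = 0 for all x, y in X. Suppose f : X → Y satisfies ‖D_f(x,y)‖ ≤ ψ(x,y) for all x, y in X and f(0) = 0. Then there exist a unique quartic function Q : X → Y and a unique additive function A : X → Y such that ‖f(x) - Q(x) - A(x)‖ ≤ (1/48) ∑_{i=0}^∞ [ (ψ(0, 2^i x) + ψ(0, -2^i x))/(2·16^i) + 12(ψ(0, 2^i x) + ψ(0, -2^i x))/2^i ] for all x in X. -/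
import Mathlib

set_option maxHeartbeats 2000000


open Filter Topology

/-- The quartic functional equation:
`Q(2x+y) + Q(2x-y) = 4(Q(x+y) + Q(x-y)) + 24 Q(x) - 6 Q(y)`. -/
def IsQuartic {X Y : Type*} [AddCommGroup X] [Module ℝ X] [AddCommGroup Y] [Module ℝ Y]
    (f : X → Y) : Prop :=
  ∀ x y : X,
    f ((2 : ℝ) • x + y) + f ((2 : ℝ) • x - y) =
      (4 : ℝ) • (f (x + y) + f (x - y)) + (24 : ℝ) • f x - (6 : ℝ) • f y

/-- The difference operator
`D_f(x,y) = 7[f(2x+y) + f(2x-y)] - 28[f(x+y) + f(x-y)] + 3[f(2y) - 2f(y)] - 14[f(2x) - 4f(x)]`. -/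
def Dmap {X Y : Type*} [AddCommGroup X] [Module ℝ X] [AddCommGroup Y] [Module ℝ Y]
    (f : X → Y) (x y : X) : Y :=
  (7 : ℝ) • (f ((2 : ℝ) • x + y) + f ((2 : ℝ) • x - y))
    - (28 : ℝ) • (f (x + y) + f (x - y))
    + (3 : ℝ) • (f ((2 : ℝ) • y) - (2 : ℝ) • f y)
    - (14 : ℝ) • (f ((2 : ℝ) • x) - (4 : ℝ) • f x)

theorem hyersLim {X Y : Type*} [NormedAddCommGroup X] [NormedSpace ℝ X]
    [NormedAddCommGroup Y] [NormedSpace ℝ Y] [CompleteSpace Y]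
    (g : X → Y) (K : ℝ) (hK : 2 ≤ K) (φ : X → ℝ)
    (he : ∀ x : X, ‖g ((2 : ℝ) • x) - K • g x‖ ≤ φ x)
    (hsum : ∀ x : X, Summable fun i : ℕ => φ ((2 : ℝ) ^ i • x) / K ^ i) :
    ∃ T : X → Y,
      (∀ x : X, Tendsto (fun n : ℕ => (K ^ n)⁻¹ • g ((2 : ℝ) ^ n • x)) atTop (𝓝 (T x))) ∧
      ∀ x : X, ‖g x - T x‖ ≤ (∑' i : ℕ, φ ((2 : ℝ) ^ i • x) / K ^ i) / K := by
  have hK0 : (0 : ℝ) < K := lt_of_lt_of_le two_pos hK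
  set u : X → ℕ → Y := fun x n => (K ^ n)⁻¹ • g ((2 : ℝ) ^ n • x) with hu
  have hdist : ∀ x n, dist (u x n) (u x (n + 1)) ≤ φ ((2 : ℝ) ^ n • x) / K ^ (n + 1) := by
    intro x n
    rw [dist_eq_norm]
    have harg : (2 : ℝ) ^ (n + 1) • x = (2 : ℝ) • ((2 : ℝ) ^ n • x) := by
      rw [pow_succ']; exact mul_smul _ _ _
    have hrw : u x n - u x (n + 1)
        = (K ^ (n + 1))⁻¹ • (K • g ((2 : ℝ) ^ n • x) - g ((2 : ℝ) • ((2 : ℝ) ^ n • x))) := by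
      simp only [hu, harg]
      match_scalars
      · rw [pow_succ]; field_simp
      · ring
    rw [hrw, norm_smul, norm_inv, norm_sub_rev]
    rw [Real.norm_eq_abs, abs_of_pos (pow_pos hK0 _), div_eq_inv_mul]
    exact mul_le_mul_of_nonneg_left (he _) (by positivity)
  have hdsum : ∀ x, Summable (fun n : ℕ => φ ((2 : ℝ) ^ n • x) / K ^ (n + 1)) := by
    intro x
    refine ((hsum x).div_const K).congr fun n => ?_
    rw [pow_succ]
    field_simp
  have hcau : ∀ x, CauchySeq (u x) := fun x =>
    cauchySeq_of_dist_le_of_summable _ (hdist x) (hdsum x)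
  choose T hT using fun x => cauchySeq_tendsto_of_complete (hcau x)
  refine ⟨T, hT, fun x => ?_⟩
  have h0 : u x 0 = g x := by simp [hu]
  have hb := dist_le_tsum_of_dist_le_of_tendsto₀ _ (hdist x) (hdsum x) (hT x)
  rw [h0, dist_eq_norm] at hb
  refine hb.trans (le_of_eq ?_)
  rw [← tsum_div_const]
  refine tsum_congr fun n => ?_
  rw [pow_succ]
  field_simp

theorem quarticOfD {X Y : Type*} [AddCommGroup X] [Module ℝ X] [AddCommGroup Y] [Module ℝ Y]
    (Q : X → Y) (hDQ : ∀ x y : X, Dmap Q x y = 0) (heven : ∀ z : X, Q (-z) = Q z)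
    (h0 : Q 0 = 0) : IsQuartic Q := by
  have h16 : ∀ y : X, Q ((2 : ℝ) • y) = (16 : ℝ) • Q y := by
    intro y
    have hDy := hDQ 0 y
    have key : Q ((2 : ℝ) • y) - (16 : ℝ) • Q y = (3 : ℝ)⁻¹ • Dmap Q 0 y := by
      simp only [Dmap]
      rw [show (2 : ℝ) • (0 : X) + y = y by module, show (2 : ℝ) • (0 : X) - y = -y by module,
          show (0 : X) + y = y by module, show (0 : X) - y = -y by module,
          show (2 : ℝ) • (0 : X) = (0 : X) by module, heven y, h0]
      module
    rw [hDy, smul_zero] at key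
    exact sub_eq_zero.mp key
  intro x y
  have hDxy := hDQ x y
  have key : (Q ((2 : ℝ) • x + y) + Q ((2 : ℝ) • x - y)) -
      ((4 : ℝ) • (Q (x + y) + Q (x - y)) + (24 : ℝ) • Q x - (6 : ℝ) • Q y)
      = (7 : ℝ)⁻¹ • Dmap Q x y := by
    simp only [Dmap]
    rw [h16 x, h16 y]
    module
  rw [hDxy, smul_zero] at key
  exact sub_eq_zero.mp key

theorem quartic_zero {X Y : Type*} [AddCommGroup X] [Module ℝ X] [AddCommGroup Y] [Module ℝ Y]
    (Q : X → Y) (hQ : IsQuartic Q) : Q 0 = 0 := by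
  have h := hQ 0 0
  rw [show (2 : ℝ) • (0 : X) + 0 = (0 : X) by module, show (2 : ℝ) • (0 : X) - 0 = (0 : X) by module,
      show (0 : X) + 0 = (0 : X) by module, show (0 : X) - 0 = (0 : X) by module] at h
  have e : (24 : ℝ) • Q 0 = ((4 : ℝ) • (Q 0 + Q 0) + (24 : ℝ) • Q 0 - (6 : ℝ) • Q 0) - (Q 0 + Q 0) := by
    module
  rw [← h, sub_self] at e
  rcases smul_eq_zero.mp e with h' | h'
  · norm_num at h'
  · exact h'

theorem quartic_scale {X Y : Type*} [AddCommGroup X] [Module ℝ X] [AddCommGroup Y] [Module ℝ Y]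
    (Q : X → Y) (hQ : IsQuartic Q) (x : X) (n : ℕ) :
    Q ((2 : ℝ) ^ n • x) = (16 : ℝ) ^ n • Q x := by
  have h0 := quartic_zero Q hQ
  have h2 : ∀ z : X, Q ((2 : ℝ) • z) = (16 : ℝ) • Q z := by
    intro z
    have h := hQ z 0
    rw [show (2 : ℝ) • z + 0 = (2 : ℝ) • z by module, show (2 : ℝ) • z - 0 = (2 : ℝ) • z by module,
        show z + (0 : X) = z by module, show z - (0 : X) = z by module, h0] at h
    have e : (2 : ℝ) • (Q ((2 : ℝ) • z) - (16 : ℝ) • Q z)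
        = (Q ((2 : ℝ) • z) + Q ((2 : ℝ) • z))
          - ((4 : ℝ) • (Q z + Q z) + (24 : ℝ) • Q z - (6 : ℝ) • (0 : Y)) := by module
    rw [h, sub_self] at e
    rcases smul_eq_zero.mp e with h' | h'
    · norm_num at h'
    · exact sub_eq_zero.mp h'
  induction n with
  | zero => simp
  | succ n ih =>
    rw [show (2 : ℝ) ^ (n + 1) • x = (2 : ℝ) • ((2 : ℝ) ^ n • x) by rw [pow_succ', mul_smul],
      h2, ih, smul_smul, ← pow_succ']

theorem additive_scale {X Y : Type*} [AddCommGroup X] [Module ℝ X] [AddCommGroup Y] [Module ℝ Y]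
    (A : X → Y) (hA : ∀ x y : X, A (x + y) = A x + A y) (x : X) (n : ℕ) :
    A ((2 : ℝ) ^ n • x) = (2 : ℝ) ^ n • A x := by
  have h2 : ∀ z : X, A ((2 : ℝ) • z) = (2 : ℝ) • A z := by
    intro z
    calc A ((2 : ℝ) • z) = A (z + z) := by rw [two_smul]
      _ = A z + A z := hA z z
      _ = (2 : ℝ) • A z := (two_smul ℝ (A z)).symm
  induction n with
  | zero => simp
  | succ n ih =>
    rw [show (2 : ℝ) ^ (n + 1) • x = (2 : ℝ) • ((2 : ℝ) ^ n • x) by rw [pow_succ', mul_smul],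
      h2, ih, smul_smul, ← pow_succ']

theorem dmap_limit {X Y : Type*} [NormedAddCommGroup X] [NormedSpace ℝ X]
    [NormedAddCommGroup Y] [NormedSpace ℝ Y]
    (g T : X → Y) (K : ℝ) (hK : 2 ≤ K)
    (hlim : ∀ z : X, Tendsto (fun n : ℕ => (K ^ n)⁻¹ • g ((2 : ℝ) ^ n • z)) atTop (𝓝 (T z)))
    (x y : X) (b : ℕ → ℝ) (hbnn : ∀ n, 0 ≤ b n)
    (hbd : ∀ n : ℕ, ‖Dmap g ((2 : ℝ) ^ n • x) ((2 : ℝ) ^ n • y)‖ ≤ b n)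
    (hb0 : Tendsto (fun n : ℕ => b n / 2 ^ n) atTop (𝓝 0)) :
    Dmap T x y = 0 := by
  have hK0 : (0 : ℝ) < K := lt_of_lt_of_le two_pos hK
  set u : ℕ → X → Y := fun n z => (K ^ n)⁻¹ • g ((2 : ℝ) ^ n • z) with hu
  have hulim : ∀ z, Tendsto (fun n => u n z) atTop (𝓝 (T z)) := fun z => hlim z
  have e : ∀ n : ℕ,
      (7 : ℝ) • (u n ((2 : ℝ) • x + y) + u n ((2 : ℝ) • x - y))
        - (28 : ℝ) • (u n (x + y) + u n (x - y))
        + (3 : ℝ) • (u n ((2 : ℝ) • y) - (2 : ℝ) • u n y)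
        - (14 : ℝ) • (u n ((2 : ℝ) • x) - (4 : ℝ) • u n x)
      = (K ^ n)⁻¹ • Dmap g ((2 : ℝ) ^ n • x) ((2 : ℝ) ^ n • y) := by
    intro n
    simp only [hu, Dmap]
    rw [show (2 : ℝ) ^ n • ((2 : ℝ) • x + y) = (2 : ℝ) • ((2 : ℝ) ^ n • x) + (2 : ℝ) ^ n • y by module,
        show (2 : ℝ) ^ n • ((2 : ℝ) • x - y) = (2 : ℝ) • ((2 : ℝ) ^ n • x) - (2 : ℝ) ^ n • y by module,
        show (2 : ℝ) ^ n • (x + y) = (2 : ℝ) ^ n • x + (2 : ℝ) ^ n • y by module,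
        show (2 : ℝ) ^ n • (x - y) = (2 : ℝ) ^ n • x - (2 : ℝ) ^ n • y by module,
        show (2 : ℝ) ^ n • ((2 : ℝ) • y) = (2 : ℝ) • ((2 : ℝ) ^ n • y) by module,
        show (2 : ℝ) ^ n • ((2 : ℝ) • x) = (2 : ℝ) • ((2 : ℝ) ^ n • x) by module]
    module
  have hcomb : Tendsto (fun n : ℕ =>
      (7 : ℝ) • (u n ((2 : ℝ) • x + y) + u n ((2 : ℝ) • x - y))
        - (28 : ℝ) • (u n (x + y) + u n (x - y))
        + (3 : ℝ) • (u n ((2 : ℝ) • y) - (2 : ℝ) • u n y)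
        - (14 : ℝ) • (u n ((2 : ℝ) • x) - (4 : ℝ) • u n x)) atTop
      (𝓝 ((7 : ℝ) • (T ((2 : ℝ) • x + y) + T ((2 : ℝ) • x - y))
        - (28 : ℝ) • (T (x + y) + T (x - y))
        + (3 : ℝ) • (T ((2 : ℝ) • y) - (2 : ℝ) • T y)
        - (14 : ℝ) • (T ((2 : ℝ) • x) - (4 : ℝ) • T x))) := by
    exact (((((hulim _).add (hulim _)).const_smul _).sub
        (((hulim _).add (hulim _)).const_smul _)).add
        (((hulim _).sub ((hulim _).const_smul _)).const_smul _)).sub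
        (((hulim _).sub ((hulim _).const_smul _)).const_smul _)
  have hzero : Tendsto (fun n : ℕ => (K ^ n)⁻¹ • Dmap g ((2 : ℝ) ^ n • x) ((2 : ℝ) ^ n • y))
      atTop (𝓝 0) := by
    apply squeeze_zero_norm (fun n => ?_) hb0
    rw [norm_smul, norm_inv, Real.norm_eq_abs, abs_of_pos (pow_pos hK0 n)]
    calc (K ^ n)⁻¹ * ‖Dmap g ((2 : ℝ) ^ n • x) ((2 : ℝ) ^ n • y)‖
        ≤ (K ^ n)⁻¹ * b n := mul_le_mul_of_nonneg_left (hbd n) (by positivity)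
      _ ≤ ((2 : ℝ) ^ n)⁻¹ * b n := by
          apply mul_le_mul_of_nonneg_right _ (hbnn n)
          exact inv_anti₀ (by positivity) (pow_le_pow_left₀ (by norm_num) hK n)
      _ = b n / 2 ^ n := by ring
  have := tendsto_nhds_unique (hcomb.congr e) hzero
  exact this
theorem addOfE {X Y : Type*} [AddCommGroup X] [Module ℝ X] [AddCommGroup Y] [Module ℝ Y]
    (A : X → Y)
    (hE : ∀ u v : X, A ((2 : ℝ) • u + v) + A ((2 : ℝ) • u - v)
        = (4 : ℝ) • A (u + v) + (4 : ℝ) • A (u - v) - (4 : ℝ) • A u)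
    (hodd : ∀ z : X, A (-z) = - A z) (x y : X) :
    A (x + y) = A x + A y := by
  have h0 := hE ((1 : ℝ) • x + (0 : ℝ) • y) ((0 : ℝ) • x + (1 : ℝ) • y)
  rw [show (2 : ℝ) • ((1 : ℝ) • x + (0 : ℝ) • y) + ((0 : ℝ) • x + (1 : ℝ) • y) = ((2 : ℝ) • x + (1 : ℝ) • y) by module,
      show (2 : ℝ) • ((1 : ℝ) • x + (0 : ℝ) • y) - ((0 : ℝ) • x + (1 : ℝ) • y) = ((2 : ℝ) • x + (-1 : ℝ) • y) by module,
      show ((1 : ℝ) • x + (0 : ℝ) • y) + ((0 : ℝ) • x + (1 : ℝ) • y) = ((1 : ℝ) • x + (1 : ℝ) • y) by module,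
      show ((1 : ℝ) • x + (0 : ℝ) • y) - ((0 : ℝ) • x + (1 : ℝ) • y) = ((1 : ℝ) • x + (-1 : ℝ) • y) by module] at h0
  have z0 : A ((2 : ℝ) • x + (1 : ℝ) • y) + A ((2 : ℝ) • x + (-1 : ℝ) • y) - ((4 : ℝ) • A ((1 : ℝ) • x + (1 : ℝ) • y) + (4 : ℝ) • A ((1 : ℝ) • x + (-1 : ℝ) • y) - (4 : ℝ) • A ((1 : ℝ) • x + (0 : ℝ) • y)) = 0 := sub_eq_zero.mpr h0
  have h1 := hE ((1 : ℝ) • x + (0 : ℝ) • y) ((1 : ℝ) • x + (1 : ℝ) • y)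
  rw [show (2 : ℝ) • ((1 : ℝ) • x + (0 : ℝ) • y) + ((1 : ℝ) • x + (1 : ℝ) • y) = ((3 : ℝ) • x + (1 : ℝ) • y) by module,
      show (2 : ℝ) • ((1 : ℝ) • x + (0 : ℝ) • y) - ((1 : ℝ) • x + (1 : ℝ) • y) = ((1 : ℝ) • x + (-1 : ℝ) • y) by module,
      show ((1 : ℝ) • x + (0 : ℝ) • y) + ((1 : ℝ) • x + (1 : ℝ) • y) = ((2 : ℝ) • x + (1 : ℝ) • y) by module,
      show ((1 : ℝ) • x + (0 : ℝ) • y) - ((1 : ℝ) • x + (1 : ℝ) • y) = ((0 : ℝ) • x + (-1 : ℝ) • y) by module] at h1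
  have z1 : A ((3 : ℝ) • x + (1 : ℝ) • y) + A ((1 : ℝ) • x + (-1 : ℝ) • y) - ((4 : ℝ) • A ((2 : ℝ) • x + (1 : ℝ) • y) + (4 : ℝ) • A ((0 : ℝ) • x + (-1 : ℝ) • y) - (4 : ℝ) • A ((1 : ℝ) • x + (0 : ℝ) • y)) = 0 := sub_eq_zero.mpr h1
  have h2 := hE ((1 : ℝ) • x + (1 : ℝ) • y) ((2 : ℝ) • x + (0 : ℝ) • y)
  rw [show (2 : ℝ) • ((1 : ℝ) • x + (1 : ℝ) • y) + ((2 : ℝ) • x + (0 : ℝ) • y) = ((4 : ℝ) • x + (2 : ℝ) • y) by module,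
      show (2 : ℝ) • ((1 : ℝ) • x + (1 : ℝ) • y) - ((2 : ℝ) • x + (0 : ℝ) • y) = ((0 : ℝ) • x + (2 : ℝ) • y) by module,
      show ((1 : ℝ) • x + (1 : ℝ) • y) + ((2 : ℝ) • x + (0 : ℝ) • y) = ((3 : ℝ) • x + (1 : ℝ) • y) by module,
      show ((1 : ℝ) • x + (1 : ℝ) • y) - ((2 : ℝ) • x + (0 : ℝ) • y) = ((-1 : ℝ) • x + (1 : ℝ) • y) by module] at h2
  have z2 : A ((4 : ℝ) • x + (2 : ℝ) • y) + A ((0 : ℝ) • x + (2 : ℝ) • y) - ((4 : ℝ) • A ((3 : ℝ) • x + (1 : ℝ) • y) + (4 : ℝ) • A ((-1 : ℝ) • x + (1 : ℝ) • y) - (4 : ℝ) • A ((1 : ℝ) • x + (1 : ℝ) • y)) = 0 := sub_eq_zero.mpr h2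
  have h3 := hE ((0 : ℝ) • x + (-1 : ℝ) • y) ((2 : ℝ) • x + (0 : ℝ) • y)
  rw [show (2 : ℝ) • ((0 : ℝ) • x + (-1 : ℝ) • y) + ((2 : ℝ) • x + (0 : ℝ) • y) = ((2 : ℝ) • x + (-2 : ℝ) • y) by module,
      show (2 : ℝ) • ((0 : ℝ) • x + (-1 : ℝ) • y) - ((2 : ℝ) • x + (0 : ℝ) • y) = ((-2 : ℝ) • x + (-2 : ℝ) • y) by module,
      show ((0 : ℝ) • x + (-1 : ℝ) • y) + ((2 : ℝ) • x + (0 : ℝ) • y) = ((2 : ℝ) • x + (-1 : ℝ) • y) by module,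
      show ((0 : ℝ) • x + (-1 : ℝ) • y) - ((2 : ℝ) • x + (0 : ℝ) • y) = ((-2 : ℝ) • x + (-1 : ℝ) • y) by module] at h3
  have z3 : A ((2 : ℝ) • x + (-2 : ℝ) • y) + A ((-2 : ℝ) • x + (-2 : ℝ) • y) - ((4 : ℝ) • A ((2 : ℝ) • x + (-1 : ℝ) • y) + (4 : ℝ) • A ((-2 : ℝ) • x + (-1 : ℝ) • y) - (4 : ℝ) • A ((0 : ℝ) • x + (-1 : ℝ) • y)) = 0 := sub_eq_zero.mpr h3
  have h4 := hE ((1 : ℝ) • x + (0 : ℝ) • y) ((1 : ℝ) • x + (-1 : ℝ) • y)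
  rw [show (2 : ℝ) • ((1 : ℝ) • x + (0 : ℝ) • y) + ((1 : ℝ) • x + (-1 : ℝ) • y) = ((3 : ℝ) • x + (-1 : ℝ) • y) by module,
      show (2 : ℝ) • ((1 : ℝ) • x + (0 : ℝ) • y) - ((1 : ℝ) • x + (-1 : ℝ) • y) = ((1 : ℝ) • x + (1 : ℝ) • y) by module,
      show ((1 : ℝ) • x + (0 : ℝ) • y) + ((1 : ℝ) • x + (-1 : ℝ) • y) = ((2 : ℝ) • x + (-1 : ℝ) • y) by module,
      show ((1 : ℝ) • x + (0 : ℝ) • y) - ((1 : ℝ) • x + (-1 : ℝ) • y) = ((0 : ℝ) • x + (1 : ℝ) • y) by module] at h4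
  have z4 : A ((3 : ℝ) • x + (-1 : ℝ) • y) + A ((1 : ℝ) • x + (1 : ℝ) • y) - ((4 : ℝ) • A ((2 : ℝ) • x + (-1 : ℝ) • y) + (4 : ℝ) • A ((0 : ℝ) • x + (1 : ℝ) • y) - (4 : ℝ) • A ((1 : ℝ) • x + (0 : ℝ) • y)) = 0 := sub_eq_zero.mpr h4
  have h5 := hE ((1 : ℝ) • x + (-1 : ℝ) • y) ((2 : ℝ) • x + (0 : ℝ) • y)
  rw [show (2 : ℝ) • ((1 : ℝ) • x + (-1 : ℝ) • y) + ((2 : ℝ) • x + (0 : ℝ) • y) = ((4 : ℝ) • x + (-2 : ℝ) • y) by module,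
      show (2 : ℝ) • ((1 : ℝ) • x + (-1 : ℝ) • y) - ((2 : ℝ) • x + (0 : ℝ) • y) = ((0 : ℝ) • x + (-2 : ℝ) • y) by module,
      show ((1 : ℝ) • x + (-1 : ℝ) • y) + ((2 : ℝ) • x + (0 : ℝ) • y) = ((3 : ℝ) • x + (-1 : ℝ) • y) by module,
      show ((1 : ℝ) • x + (-1 : ℝ) • y) - ((2 : ℝ) • x + (0 : ℝ) • y) = ((-1 : ℝ) • x + (-1 : ℝ) • y) by module] at h5
  have z5 : A ((4 : ℝ) • x + (-2 : ℝ) • y) + A ((0 : ℝ) • x + (-2 : ℝ) • y) - ((4 : ℝ) • A ((3 : ℝ) • x + (-1 : ℝ) • y) + (4 : ℝ) • A ((-1 : ℝ) • x + (-1 : ℝ) • y) - (4 : ℝ) • A ((1 : ℝ) • x + (-1 : ℝ) • y)) = 0 := sub_eq_zero.mpr h5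
  have h6 := hE ((0 : ℝ) • x + (1 : ℝ) • y) ((0 : ℝ) • x + (0 : ℝ) • y)
  rw [show (2 : ℝ) • ((0 : ℝ) • x + (1 : ℝ) • y) + ((0 : ℝ) • x + (0 : ℝ) • y) = ((0 : ℝ) • x + (2 : ℝ) • y) by module,
      show (2 : ℝ) • ((0 : ℝ) • x + (1 : ℝ) • y) - ((0 : ℝ) • x + (0 : ℝ) • y) = ((0 : ℝ) • x + (2 : ℝ) • y) by module,
      show ((0 : ℝ) • x + (1 : ℝ) • y) + ((0 : ℝ) • x + (0 : ℝ) • y) = ((0 : ℝ) • x + (1 : ℝ) • y) by module,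
      show ((0 : ℝ) • x + (1 : ℝ) • y) - ((0 : ℝ) • x + (0 : ℝ) • y) = ((0 : ℝ) • x + (1 : ℝ) • y) by module] at h6
  have z6 : A ((0 : ℝ) • x + (2 : ℝ) • y) + A ((0 : ℝ) • x + (2 : ℝ) • y) - ((4 : ℝ) • A ((0 : ℝ) • x + (1 : ℝ) • y) + (4 : ℝ) • A ((0 : ℝ) • x + (1 : ℝ) • y) - (4 : ℝ) • A ((0 : ℝ) • x + (1 : ℝ) • y)) = 0 := sub_eq_zero.mpr h6
  have h7 := hE ((1 : ℝ) • x + (1 : ℝ) • y) ((0 : ℝ) • x + (0 : ℝ) • y)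
  rw [show (2 : ℝ) • ((1 : ℝ) • x + (1 : ℝ) • y) + ((0 : ℝ) • x + (0 : ℝ) • y) = ((2 : ℝ) • x + (2 : ℝ) • y) by module,
      show (2 : ℝ) • ((1 : ℝ) • x + (1 : ℝ) • y) - ((0 : ℝ) • x + (0 : ℝ) • y) = ((2 : ℝ) • x + (2 : ℝ) • y) by module,
      show ((1 : ℝ) • x + (1 : ℝ) • y) + ((0 : ℝ) • x + (0 : ℝ) • y) = ((1 : ℝ) • x + (1 : ℝ) • y) by module,
      show ((1 : ℝ) • x + (1 : ℝ) • y) - ((0 : ℝ) • x + (0 : ℝ) • y) = ((1 : ℝ) • x + (1 : ℝ) • y) by module] at h7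
  have z7 : A ((2 : ℝ) • x + (2 : ℝ) • y) + A ((2 : ℝ) • x + (2 : ℝ) • y) - ((4 : ℝ) • A ((1 : ℝ) • x + (1 : ℝ) • y) + (4 : ℝ) • A ((1 : ℝ) • x + (1 : ℝ) • y) - (4 : ℝ) • A ((1 : ℝ) • x + (1 : ℝ) • y)) = 0 := sub_eq_zero.mpr h7
  have h8 := hE ((1 : ℝ) • x + (-1 : ℝ) • y) ((0 : ℝ) • x + (0 : ℝ) • y)
  rw [show (2 : ℝ) • ((1 : ℝ) • x + (-1 : ℝ) • y) + ((0 : ℝ) • x + (0 : ℝ) • y) = ((2 : ℝ) • x + (-2 : ℝ) • y) by module,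
      show (2 : ℝ) • ((1 : ℝ) • x + (-1 : ℝ) • y) - ((0 : ℝ) • x + (0 : ℝ) • y) = ((2 : ℝ) • x + (-2 : ℝ) • y) by module,
      show ((1 : ℝ) • x + (-1 : ℝ) • y) + ((0 : ℝ) • x + (0 : ℝ) • y) = ((1 : ℝ) • x + (-1 : ℝ) • y) by module,
      show ((1 : ℝ) • x + (-1 : ℝ) • y) - ((0 : ℝ) • x + (0 : ℝ) • y) = ((1 : ℝ) • x + (-1 : ℝ) • y) by module] at h8
  have z8 : A ((2 : ℝ) • x + (-2 : ℝ) • y) + A ((2 : ℝ) • x + (-2 : ℝ) • y) - ((4 : ℝ) • A ((1 : ℝ) • x + (-1 : ℝ) • y) + (4 : ℝ) • A ((1 : ℝ) • x + (-1 : ℝ) • y) - (4 : ℝ) • A ((1 : ℝ) • x + (-1 : ℝ) • y)) = 0 := sub_eq_zero.mpr h8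
  have h9 := hE ((2 : ℝ) • x + (1 : ℝ) • y) ((0 : ℝ) • x + (0 : ℝ) • y)
  rw [show (2 : ℝ) • ((2 : ℝ) • x + (1 : ℝ) • y) + ((0 : ℝ) • x + (0 : ℝ) • y) = ((4 : ℝ) • x + (2 : ℝ) • y) by module,
      show (2 : ℝ) • ((2 : ℝ) • x + (1 : ℝ) • y) - ((0 : ℝ) • x + (0 : ℝ) • y) = ((4 : ℝ) • x + (2 : ℝ) • y) by module,
      show ((2 : ℝ) • x + (1 : ℝ) • y) + ((0 : ℝ) • x + (0 : ℝ) • y) = ((2 : ℝ) • x + (1 : ℝ) • y) by module,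
      show ((2 : ℝ) • x + (1 : ℝ) • y) - ((0 : ℝ) • x + (0 : ℝ) • y) = ((2 : ℝ) • x + (1 : ℝ) • y) by module] at h9
  have z9 : A ((4 : ℝ) • x + (2 : ℝ) • y) + A ((4 : ℝ) • x + (2 : ℝ) • y) - ((4 : ℝ) • A ((2 : ℝ) • x + (1 : ℝ) • y) + (4 : ℝ) • A ((2 : ℝ) • x + (1 : ℝ) • y) - (4 : ℝ) • A ((2 : ℝ) • x + (1 : ℝ) • y)) = 0 := sub_eq_zero.mpr h9
  have h10 := hE ((2 : ℝ) • x + (-1 : ℝ) • y) ((0 : ℝ) • x + (0 : ℝ) • y)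
  rw [show (2 : ℝ) • ((2 : ℝ) • x + (-1 : ℝ) • y) + ((0 : ℝ) • x + (0 : ℝ) • y) = ((4 : ℝ) • x + (-2 : ℝ) • y) by module,
      show (2 : ℝ) • ((2 : ℝ) • x + (-1 : ℝ) • y) - ((0 : ℝ) • x + (0 : ℝ) • y) = ((4 : ℝ) • x + (-2 : ℝ) • y) by module,
      show ((2 : ℝ) • x + (-1 : ℝ) • y) + ((0 : ℝ) • x + (0 : ℝ) • y) = ((2 : ℝ) • x + (-1 : ℝ) • y) by module,
      show ((2 : ℝ) • x + (-1 : ℝ) • y) - ((0 : ℝ) • x + (0 : ℝ) • y) = ((2 : ℝ) • x + (-1 : ℝ) • y) by module] at h10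
  have z10 : A ((4 : ℝ) • x + (-2 : ℝ) • y) + A ((4 : ℝ) • x + (-2 : ℝ) • y) - ((4 : ℝ) • A ((2 : ℝ) • x + (-1 : ℝ) • y) + (4 : ℝ) • A ((2 : ℝ) • x + (-1 : ℝ) • y) - (4 : ℝ) • A ((2 : ℝ) • x + (-1 : ℝ) • y)) = 0 := sub_eq_zero.mpr h10
  have o0 : A ((2 : ℝ) • x + (1 : ℝ) • y) + A ((-2 : ℝ) • x + (-1 : ℝ) • y) = 0 := by
    rw [show ((-2 : ℝ) • x + (-1 : ℝ) • y) = -((2 : ℝ) • x + (1 : ℝ) • y) by module, hodd]; simp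
  have o1 : A ((1 : ℝ) • x + (1 : ℝ) • y) + A ((-1 : ℝ) • x + (-1 : ℝ) • y) = 0 := by
    rw [show ((-1 : ℝ) • x + (-1 : ℝ) • y) = -((1 : ℝ) • x + (1 : ℝ) • y) by module, hodd]; simp
  have o2 : A ((1 : ℝ) • x + (-1 : ℝ) • y) + A ((-1 : ℝ) • x + (1 : ℝ) • y) = 0 := by
    rw [show ((-1 : ℝ) • x + (1 : ℝ) • y) = -((1 : ℝ) • x + (-1 : ℝ) • y) by module, hodd]; simp
  have o3 : A ((2 : ℝ) • x + (2 : ℝ) • y) + A ((-2 : ℝ) • x + (-2 : ℝ) • y) = 0 := by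
    rw [show ((-2 : ℝ) • x + (-2 : ℝ) • y) = -((2 : ℝ) • x + (2 : ℝ) • y) by module, hodd]; simp
  have o4 : A ((0 : ℝ) • x + (1 : ℝ) • y) + A ((0 : ℝ) • x + (-1 : ℝ) • y) = 0 := by
    rw [show ((0 : ℝ) • x + (-1 : ℝ) • y) = -((0 : ℝ) • x + (1 : ℝ) • y) by module, hodd]; simp
  have o5 : A ((0 : ℝ) • x + (2 : ℝ) • y) + A ((0 : ℝ) • x + (-2 : ℝ) • y) = 0 := by
    rw [show ((0 : ℝ) • x + (-2 : ℝ) • y) = -((0 : ℝ) • x + (2 : ℝ) • y) by module, hodd]; simp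
  have comb : A ((1 : ℝ) • x + (1 : ℝ) • y) - (A ((1 : ℝ) • x + (0 : ℝ) • y) + A ((0 : ℝ) • x + (1 : ℝ) • y)) = (-7 / 44 : ℝ) • (A ((2 : ℝ) • x + (1 : ℝ) • y) + A ((2 : ℝ) • x + (-1 : ℝ) • y) - ((4 : ℝ) • A ((1 : ℝ) • x + (1 : ℝ) • y) + (4 : ℝ) • A ((1 : ℝ) • x + (-1 : ℝ) • y) - (4 : ℝ) • A ((1 : ℝ) • x + (0 : ℝ) • y))) +
      (-5 / 22 : ℝ) • (A ((3 : ℝ) • x + (1 : ℝ) • y) + A ((1 : ℝ) • x + (-1 : ℝ) • y) - ((4 : ℝ) • A ((2 : ℝ) • x + (1 : ℝ) • y) + (4 : ℝ) • A ((0 : ℝ) • x + (-1 : ℝ) • y) - (4 : ℝ) • A ((1 : ℝ) • x + (0 : ℝ) • y))) +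
      (-5 / 88 : ℝ) • (A ((4 : ℝ) • x + (2 : ℝ) • y) + A ((0 : ℝ) • x + (2 : ℝ) • y) - ((4 : ℝ) • A ((3 : ℝ) • x + (1 : ℝ) • y) + (4 : ℝ) • A ((-1 : ℝ) • x + (1 : ℝ) • y) - (4 : ℝ) • A ((1 : ℝ) • x + (1 : ℝ) • y))) +
      (-7 / 44 : ℝ) • (A ((2 : ℝ) • x + (-2 : ℝ) • y) + A ((-2 : ℝ) • x + (-2 : ℝ) • y) - ((4 : ℝ) • A ((2 : ℝ) • x + (-1 : ℝ) • y) + (4 : ℝ) • A ((-2 : ℝ) • x + (-1 : ℝ) • y) - (4 : ℝ) • A ((0 : ℝ) • x + (-1 : ℝ) • y))) +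
      (3 / 22 : ℝ) • (A ((3 : ℝ) • x + (-1 : ℝ) • y) + A ((1 : ℝ) • x + (1 : ℝ) • y) - ((4 : ℝ) • A ((2 : ℝ) • x + (-1 : ℝ) • y) + (4 : ℝ) • A ((0 : ℝ) • x + (1 : ℝ) • y) - (4 : ℝ) • A ((1 : ℝ) • x + (0 : ℝ) • y))) +
      (3 / 88 : ℝ) • (A ((4 : ℝ) • x + (-2 : ℝ) • y) + A ((0 : ℝ) • x + (-2 : ℝ) • y) - ((4 : ℝ) • A ((3 : ℝ) • x + (-1 : ℝ) • y) + (4 : ℝ) • A ((-1 : ℝ) • x + (-1 : ℝ) • y) - (4 : ℝ) • A ((1 : ℝ) • x + (-1 : ℝ) • y))) +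
      (1 / 22 : ℝ) • (A ((0 : ℝ) • x + (2 : ℝ) • y) + A ((0 : ℝ) • x + (2 : ℝ) • y) - ((4 : ℝ) • A ((0 : ℝ) • x + (1 : ℝ) • y) + (4 : ℝ) • A ((0 : ℝ) • x + (1 : ℝ) • y) - (4 : ℝ) • A ((0 : ℝ) • x + (1 : ℝ) • y))) +
      (-7 / 88 : ℝ) • (A ((2 : ℝ) • x + (2 : ℝ) • y) + A ((2 : ℝ) • x + (2 : ℝ) • y) - ((4 : ℝ) • A ((1 : ℝ) • x + (1 : ℝ) • y) + (4 : ℝ) • A ((1 : ℝ) • x + (1 : ℝ) • y) - (4 : ℝ) • A ((1 : ℝ) • x + (1 : ℝ) • y))) +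
      (7 / 88 : ℝ) • (A ((2 : ℝ) • x + (-2 : ℝ) • y) + A ((2 : ℝ) • x + (-2 : ℝ) • y) - ((4 : ℝ) • A ((1 : ℝ) • x + (-1 : ℝ) • y) + (4 : ℝ) • A ((1 : ℝ) • x + (-1 : ℝ) • y) - (4 : ℝ) • A ((1 : ℝ) • x + (-1 : ℝ) • y))) +
      (5 / 176 : ℝ) • (A ((4 : ℝ) • x + (2 : ℝ) • y) + A ((4 : ℝ) • x + (2 : ℝ) • y) - ((4 : ℝ) • A ((2 : ℝ) • x + (1 : ℝ) • y) + (4 : ℝ) • A ((2 : ℝ) • x + (1 : ℝ) • y) - (4 : ℝ) • A ((2 : ℝ) • x + (1 : ℝ) • y))) +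
      (-3 / 176 : ℝ) • (A ((4 : ℝ) • x + (-2 : ℝ) • y) + A ((4 : ℝ) • x + (-2 : ℝ) • y) - ((4 : ℝ) • A ((2 : ℝ) • x + (-1 : ℝ) • y) + (4 : ℝ) • A ((2 : ℝ) • x + (-1 : ℝ) • y) - (4 : ℝ) • A ((2 : ℝ) • x + (-1 : ℝ) • y))) +
      (-7 / 11 : ℝ) • (A ((2 : ℝ) • x + (1 : ℝ) • y) + A ((-2 : ℝ) • x + (-1 : ℝ) • y)) +
      (3 / 22 : ℝ) • (A ((1 : ℝ) • x + (1 : ℝ) • y) + A ((-1 : ℝ) • x + (-1 : ℝ) • y)) +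
      (-5 / 22 : ℝ) • (A ((1 : ℝ) • x + (-1 : ℝ) • y) + A ((-1 : ℝ) • x + (1 : ℝ) • y)) +
      (7 / 44 : ℝ) • (A ((2 : ℝ) • x + (2 : ℝ) • y) + A ((-2 : ℝ) • x + (-2 : ℝ) • y)) +
      (-3 / 11 : ℝ) • (A ((0 : ℝ) • x + (1 : ℝ) • y) + A ((0 : ℝ) • x + (-1 : ℝ) • y)) +
      (-3 / 88 : ℝ) • (A ((0 : ℝ) • x + (2 : ℝ) • y) + A ((0 : ℝ) • x + (-2 : ℝ) • y)) := by module
  rw [z0, z1, z2, z3, z4, z5, z6, z7, z8, z9, z10, o0, o1, o2, o3, o4, o5] at comb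
  simp only [smul_zero, add_zero, zero_add] at comb
  rw [sub_eq_zero] at comb
  rw [show ((1 : ℝ) • x + (1 : ℝ) • y) = x + y by module, show ((1 : ℝ) • x + (0 : ℝ) • y) = x by module, show ((0 : ℝ) • x + (1 : ℝ) • y) = y by module] at comb
  exact comb

theorem uniq_half {X Y : Type*} [NormedAddCommGroup X] [NormedSpace ℝ X]
    [NormedAddCommGroup Y] [NormedSpace ℝ Y]
    (f Q A Q' A' : X → Y) (Kb : X → ℝ)
    (hQsc : ∀ (x : X) (n : ℕ), Q ((2 : ℝ) ^ n • x) = (16 : ℝ) ^ n • Q x)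
    (hQ'sc : ∀ (x : X) (n : ℕ), Q' ((2 : ℝ) ^ n • x) = (16 : ℝ) ^ n • Q' x)
    (hAsc : ∀ (x : X) (n : ℕ), A ((2 : ℝ) ^ n • x) = (2 : ℝ) ^ n • A x)
    (hA'sc : ∀ (x : X) (n : ℕ), A' ((2 : ℝ) ^ n • x) = (2 : ℝ) ^ n • A' x)
    (hKtail : ∀ x : X, Tendsto (fun n : ℕ => Kb ((2 : ℝ) ^ n • x) / 2 ^ n) atTop (𝓝 0))
    (hb1 : ∀ x : X, ‖f x - Q x - A x‖ ≤ Kb x)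
    (hb2 : ∀ x : X, ‖f x - Q' x - A' x‖ ≤ Kb x) :
    Q' = Q ∧ A' = A := by
  have hKbnn : ∀ z : X, 0 ≤ Kb z := fun z => (norm_nonneg _).trans (hb1 z)
  have hbig : ∀ (x : X) (n : ℕ),
      ‖(16 : ℝ) ^ n • (Q' x - Q x) + (2 : ℝ) ^ n • (A' x - A x)‖ ≤ 2 * Kb ((2 : ℝ) ^ n • x) := by
    intro x n
    have key : (16 : ℝ) ^ n • (Q' x - Q x) + (2 : ℝ) ^ n • (A' x - A x)
        = (f ((2 : ℝ) ^ n • x) - Q ((2 : ℝ) ^ n • x) - A ((2 : ℝ) ^ n • x))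
          - (f ((2 : ℝ) ^ n • x) - Q' ((2 : ℝ) ^ n • x) - A' ((2 : ℝ) ^ n • x)) := by
      rw [hQsc, hQ'sc, hAsc, hA'sc]; module
    rw [key]
    calc ‖(f ((2 : ℝ) ^ n • x) - Q ((2 : ℝ) ^ n • x) - A ((2 : ℝ) ^ n • x))
          - (f ((2 : ℝ) ^ n • x) - Q' ((2 : ℝ) ^ n • x) - A' ((2 : ℝ) ^ n • x))‖
        ≤ ‖f ((2 : ℝ) ^ n • x) - Q ((2 : ℝ) ^ n • x) - A ((2 : ℝ) ^ n • x)‖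
          + ‖f ((2 : ℝ) ^ n • x) - Q' ((2 : ℝ) ^ n • x) - A' ((2 : ℝ) ^ n • x)‖ := norm_sub_le _ _
      _ ≤ Kb ((2 : ℝ) ^ n • x) + Kb ((2 : ℝ) ^ n • x) := add_le_add (hb1 _) (hb2 _)
      _ = 2 * Kb ((2 : ℝ) ^ n • x) := by ring
  have hrhs0 : ∀ x : X, Tendsto (fun n : ℕ => 2 * Kb ((2 : ℝ) ^ n • x) / 2 ^ n) atTop (𝓝 0) := by
    intro x
    have h := (hKtail x).const_mul (2 : ℝ)
    rw [mul_zero] at h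
    exact h.congr fun n => by ring
  have hPz : ∀ x : X, Q' x - Q x = 0 := by
    intro x
    have h1 : ∀ n : ℕ, ‖(Q' x - Q x) + ((1 : ℝ) / 8) ^ n • (A' x - A x)‖
        ≤ 2 * Kb ((2 : ℝ) ^ n • x) / 2 ^ n := by
      intro n
      have h16 : ((16 : ℝ) ^ n)⁻¹ * 16 ^ n = 1 := inv_mul_cancel₀ (by positivity)
      have h8 : ((16 : ℝ) ^ n)⁻¹ * 2 ^ n = ((1 : ℝ) / 8) ^ n := by
        have h1 : ((1 : ℝ) / 8) ^ n = (2 : ℝ) ^ n / 16 ^ n := by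
          rw [← div_pow]; norm_num
        rw [h1, inv_mul_eq_div]
      have e : (Q' x - Q x) + ((1 : ℝ) / 8) ^ n • (A' x - A x)
          = ((16 : ℝ) ^ n)⁻¹ • ((16 : ℝ) ^ n • (Q' x - Q x) + (2 : ℝ) ^ n • (A' x - A x)) := by
        rw [smul_add, smul_smul, smul_smul, h16, one_smul, h8]
      rw [e, norm_smul, norm_inv, Real.norm_eq_abs, abs_of_pos (by positivity : (0 : ℝ) < (16 : ℝ) ^ n)]
      calc ((16 : ℝ) ^ n)⁻¹ * ‖(16 : ℝ) ^ n • (Q' x - Q x) + (2 : ℝ) ^ n • (A' x - A x)‖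
          ≤ ((16 : ℝ) ^ n)⁻¹ * (2 * Kb ((2 : ℝ) ^ n • x)) :=
            mul_le_mul_of_nonneg_left (hbig x n) (by positivity)
        _ ≤ ((2 : ℝ) ^ n)⁻¹ * (2 * Kb ((2 : ℝ) ^ n • x)) := by
            apply mul_le_mul_of_nonneg_right _ (by have := hKbnn ((2 : ℝ) ^ n • x); linarith)
            exact inv_anti₀ (by positivity) (pow_le_pow_left₀ (by norm_num) (by norm_num) n)
        _ = 2 * Kb ((2 : ℝ) ^ n • x) / 2 ^ n := by ring
    have hlhs : Tendsto (fun n : ℕ => (Q' x - Q x) + ((1 : ℝ) / 8) ^ n • (A' x - A x))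
        atTop (𝓝 (Q' x - Q x)) := by
      have h8 : Tendsto (fun n : ℕ => ((1 : ℝ) / 8) ^ n) atTop (𝓝 0) :=
        tendsto_pow_atTop_nhds_zero_of_lt_one (by norm_num) (by norm_num)
      have h2 := h8.smul_const (A' x - A x)
      rw [zero_smul] at h2
      have h3 := (tendsto_const_nhds : Tendsto (fun _ : ℕ => Q' x - Q x) atTop (𝓝 (Q' x - Q x))).add h2
      rw [add_zero] at h3
      exact h3
    have hle := le_of_tendsto_of_tendsto' hlhs.norm (hrhs0 x) h1
    exact norm_le_zero_iff.mp hle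
  have hLz : ∀ x : X, A' x - A x = 0 := by
    intro x
    have h1 : ∀ n : ℕ, ‖A' x - A x‖ ≤ 2 * Kb ((2 : ℝ) ^ n • x) / 2 ^ n := by
      intro n
      have hb := hbig x n
      rw [hPz x, smul_zero, zero_add, norm_smul, Real.norm_eq_abs,
        abs_of_pos (by positivity : (0 : ℝ) < (2 : ℝ) ^ n)] at hb
      rw [le_div_iff₀ (by positivity : (0 : ℝ) < (2 : ℝ) ^ n)]
      linarith
    exact norm_le_zero_iff.mp (le_of_tendsto_of_tendsto' tendsto_const_nhds (hrhs0 x) h1)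
  exact ⟨funext fun x => sub_eq_zero.mp (hPz x), funext fun x => sub_eq_zero.mp (hLz x)⟩

theorem mixed_stability {X Y : Type*} [NormedAddCommGroup X] [NormedSpace ℝ X]
    [NormedAddCommGroup Y] [NormedSpace ℝ Y] [CompleteSpace Y]
    (ψ : X → X → ℝ) (hψ : ∀ x y : X, 0 ≤ ψ x y)
    (hsum : ∀ x : X, Summable fun i : ℕ => ψ 0 ((2 : ℝ) ^ i • x) / 2 ^ i)
    (hlim : ∀ x y : X,
      Tendsto (fun n : ℕ => ψ ((2 : ℝ) ^ n • x) ((2 : ℝ) ^ n • y) / 2 ^ n) atTop (𝓝 0))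
    (f : X → Y) (hD : ∀ x y : X, ‖Dmap f x y‖ ≤ ψ x y) (hf0 : f 0 = 0) :
    ∃ (Q A : X → Y), IsQuartic Q ∧ (∀ x y : X, A (x + y) = A x + A y) ∧
      (∀ x : X, ‖f x - Q x - A x‖ ≤ (1 / 48) * ∑' i : ℕ,
        ((ψ 0 ((2 : ℝ) ^ i • x) + ψ 0 (-((2 : ℝ) ^ i • x))) / (2 * 16 ^ i) +
          12 * (ψ 0 ((2 : ℝ) ^ i • x) + ψ 0 (-((2 : ℝ) ^ i • x))) / 2 ^ i)) ∧
      ∀ Q' A' : X → Y, IsQuartic Q' → (∀ x y : X, A' (x + y) = A' x + A' y) →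
        (∀ x : X, ‖f x - Q' x - A' x‖ ≤ (1 / 48) * ∑' i : ℕ,
          ((ψ 0 ((2 : ℝ) ^ i • x) + ψ 0 (-((2 : ℝ) ^ i • x))) / (2 * 16 ^ i) +
            12 * (ψ 0 ((2 : ℝ) ^ i • x) + ψ 0 (-((2 : ℝ) ^ i • x))) / 2 ^ i)) →
        Q' = Q ∧ A' = A := by
  -- the even and odd parts of f and the control function φ
  set φ : X → ℝ := fun z => (ψ 0 z + ψ 0 (-z)) / 6 with hφdef
  set ge : X → Y := fun z => (2 : ℝ)⁻¹ • (f z + f (-z)) with hgdef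
  set ho : X → Y := fun z => (2 : ℝ)⁻¹ • (f z - f (-z)) with hhdef
  have hφ0 : ∀ z : X, 0 ≤ φ z := by
    intro z
    have h1 := hψ 0 z
    have h2 := hψ 0 (-z)
    simp only [hφdef]
    positivity
  have hsumneg : ∀ x : X, Summable fun i : ℕ => ψ 0 (-((2 : ℝ) ^ i • x)) / 2 ^ i := by
    intro x
    refine (hsum (-x)).congr fun i => ?_
    rw [smul_neg]
  have hφ2 : ∀ x : X, Summable fun i : ℕ => φ ((2 : ℝ) ^ i • x) / 2 ^ i := by
    intro x
    refine (((hsum x).add (hsumneg x)).div_const 6).congr fun i => ?_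
    simp only [hφdef]
    ring
  have hφ16 : ∀ x : X, Summable fun i : ℕ => φ ((2 : ℝ) ^ i • x) / 16 ^ i := by
    intro x
    refine Summable.of_nonneg_of_le (fun i => div_nonneg (hφ0 _) (by positivity)) (fun i => ?_) (hφ2 x)
    have h1 : (2 : ℝ) ^ i ≤ 16 ^ i := pow_le_pow_left₀ (by norm_num) (by norm_num) i
    have h2 : (0 : ℝ) < 2 ^ i := by positivity
    rw [div_le_div_iff₀ (by positivity) h2]
    exact mul_le_mul_of_nonneg_left h1 (hφ0 _)
  -- approximate 16- and 2-homogeneity of the even and odd parts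
  have heg : ∀ y : X, ‖ge ((2 : ℝ) • y) - (16 : ℝ) • ge y‖ ≤ φ y := by
    intro y
    have key : ge ((2 : ℝ) • y) - (16 : ℝ) • ge y = (6 : ℝ)⁻¹ • (Dmap f 0 y + Dmap f 0 (-y)) := by
      simp only [hgdef, Dmap]
      rw [show (2 : ℝ) • (0 : X) + y = y by module,
          show (2 : ℝ) • (0 : X) - y = -y by module,
          show (2 : ℝ) • (0 : X) + -y = -y by module,
          show (2 : ℝ) • (0 : X) - -y = y by module,
          show (0 : X) + y = y by module,
          show (0 : X) - y = -y by module,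
          show (0 : X) + -y = -y by module,
          show (0 : X) - -y = y by module,
          show (2 : ℝ) • (-y) = -((2 : ℝ) • y) by module,
          show (2 : ℝ) • (0 : X) = (0 : X) by module,
          hf0]
      module
    rw [key]
    have h1 : ‖(6 : ℝ)⁻¹ • (Dmap f 0 y + Dmap f 0 (-y))‖ ≤ (6 : ℝ)⁻¹ * (ψ 0 y + ψ 0 (-y)) := by
      rw [norm_smul, Real.norm_eq_abs, abs_of_pos (by norm_num : (0 : ℝ) < (6 : ℝ)⁻¹)]
      exact mul_le_mul_of_nonneg_left
        ((norm_add_le _ _).trans (add_le_add (hD 0 y) (hD 0 (-y)))) (by norm_num)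
    refine h1.trans (le_of_eq ?_)
    simp only [hφdef]
    ring
  have heh : ∀ y : X, ‖ho ((2 : ℝ) • y) - (2 : ℝ) • ho y‖ ≤ φ y := by
    intro y
    have key : ho ((2 : ℝ) • y) - (2 : ℝ) • ho y = (6 : ℝ)⁻¹ • (Dmap f 0 y - Dmap f 0 (-y)) := by
      simp only [hhdef, Dmap]
      rw [show (2 : ℝ) • (0 : X) + y = y by module,
          show (2 : ℝ) • (0 : X) - y = -y by module,
          show (2 : ℝ) • (0 : X) + -y = -y by module,
          show (2 : ℝ) • (0 : X) - -y = y by module,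
          show (0 : X) + y = y by module,
          show (0 : X) - y = -y by module,
          show (0 : X) + -y = -y by module,
          show (0 : X) - -y = y by module,
          show (2 : ℝ) • (-y) = -((2 : ℝ) • y) by module,
          show (2 : ℝ) • (0 : X) = (0 : X) by module,
          hf0]
      module
    rw [key]
    have h1 : ‖(6 : ℝ)⁻¹ • (Dmap f 0 y - Dmap f 0 (-y))‖ ≤ (6 : ℝ)⁻¹ * (ψ 0 y + ψ 0 (-y)) := by
      rw [norm_smul, Real.norm_eq_abs, abs_of_pos (by norm_num : (0 : ℝ) < (6 : ℝ)⁻¹)]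
      exact mul_le_mul_of_nonneg_left
        ((norm_sub_le _ _).trans (add_le_add (hD 0 y) (hD 0 (-y)))) (by norm_num)
    refine h1.trans (le_of_eq ?_)
    simp only [hφdef]
    ring
  -- construct Q and A as Hyers limits
  obtain ⟨Q, hQlim, hQbd⟩ := hyersLim ge 16 (by norm_num) φ heg hφ16
  obtain ⟨A, hAlim, hAbd⟩ := hyersLim ho 2 le_rfl φ heh hφ2
  -- basic facts about ge, ho
  have hg0 : ge 0 = 0 := by simp [hgdef, hf0]
  have hh0 : ho 0 = 0 := by simp [hhdef, hf0]
  have hgeven : ∀ z : X, ge (-z) = ge z := by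
    intro z
    simp only [hgdef]
    rw [neg_neg]
    module
  have hhodd : ∀ z : X, ho (-z) = - ho z := by
    intro z
    simp only [hhdef]
    rw [neg_neg]
    module
  -- Q is even, Q 0 = 0
  have hQ0 : Q 0 = 0 := by
    have h1 := hQlim 0
    have e : (fun n : ℕ => (((16 : ℝ)) ^ n)⁻¹ • ge ((2 : ℝ) ^ n • (0 : X))) = fun _ : ℕ => (0 : Y) := by
      funext n
      rw [smul_zero, hg0, smul_zero]
    rw [e] at h1
    exact tendsto_nhds_unique h1 tendsto_const_nhds
  have hQeven : ∀ z : X, Q (-z) = Q z := by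
    intro z
    have h1 := hQlim (-z)
    have e : (fun n : ℕ => (((16 : ℝ)) ^ n)⁻¹ • ge ((2 : ℝ) ^ n • (-z)))
        = fun n : ℕ => (((16 : ℝ)) ^ n)⁻¹ • ge ((2 : ℝ) ^ n • z) := by
      funext n
      rw [smul_neg, hgeven]
    rw [e] at h1
    exact tendsto_nhds_unique h1 (hQlim z)
  -- A is odd, A 0 = 0
  have hA0 : A 0 = 0 := by
    have h1 := hAlim 0
    have e : (fun n : ℕ => (((2 : ℝ)) ^ n)⁻¹ • ho ((2 : ℝ) ^ n • (0 : X))) = fun _ : ℕ => (0 : Y) := by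
      funext n
      rw [smul_zero, hh0, smul_zero]
    rw [e] at h1
    exact tendsto_nhds_unique h1 tendsto_const_nhds
  have hAodd : ∀ z : X, A (-z) = - A z := by
    intro z
    have h1 := hAlim (-z)
    have h2 := (hAlim z).neg
    have e : (fun n : ℕ => (((2 : ℝ)) ^ n)⁻¹ • ho ((2 : ℝ) ^ n • (-z)))
        = fun n : ℕ => -((((2 : ℝ)) ^ n)⁻¹ • ho ((2 : ℝ) ^ n • z)) := by
      funext n
      rw [smul_neg, hhodd, smul_neg]
    rw [e] at h1
    exact tendsto_nhds_unique h1 h2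
  -- bounds on Dmap of the even and odd parts
  have hDg : ∀ x y : X, ‖Dmap ge x y‖ ≤ (ψ x y + ψ (-x) (-y)) / 2 := by
    intro x y
    have key : Dmap ge x y = (2 : ℝ)⁻¹ • (Dmap f x y + Dmap f (-x) (-y)) := by
      simp only [hgdef, Dmap]
      rw [show (2 : ℝ) • (-x) + -y = -((2 : ℝ) • x + y) by module,
          show (2 : ℝ) • (-x) - -y = -((2 : ℝ) • x - y) by module,
          show -x + -y = -(x + y) by module,
          show -x - -y = -(x - y) by module,
          show (2 : ℝ) • (-y) = -((2 : ℝ) • y) by module,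
          show (2 : ℝ) • (-x) = -((2 : ℝ) • x) by module]
      module
    rw [key, norm_smul, Real.norm_eq_abs, abs_of_pos (by norm_num : (0 : ℝ) < (2 : ℝ)⁻¹)]
    have := (norm_add_le (Dmap f x y) (Dmap f (-x) (-y))).trans
      (add_le_add (hD x y) (hD (-x) (-y)))
    calc (2 : ℝ)⁻¹ * ‖Dmap f x y + Dmap f (-x) (-y)‖
        ≤ (2 : ℝ)⁻¹ * (ψ x y + ψ (-x) (-y)) := mul_le_mul_of_nonneg_left this (by norm_num)
      _ = (ψ x y + ψ (-x) (-y)) / 2 := by ring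
  have hDh : ∀ x y : X, ‖Dmap ho x y‖ ≤ (ψ x y + ψ (-x) (-y)) / 2 := by
    intro x y
    have key : Dmap ho x y = (2 : ℝ)⁻¹ • (Dmap f x y - Dmap f (-x) (-y)) := by
      simp only [hhdef, Dmap]
      rw [show (2 : ℝ) • (-x) + -y = -((2 : ℝ) • x + y) by module,
          show (2 : ℝ) • (-x) - -y = -((2 : ℝ) • x - y) by module,
          show -x + -y = -(x + y) by module,
          show -x - -y = -(x - y) by module,
          show (2 : ℝ) • (-y) = -((2 : ℝ) • y) by module,
          show (2 : ℝ) • (-x) = -((2 : ℝ) • x) by module]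
      module
    rw [key, norm_smul, Real.norm_eq_abs, abs_of_pos (by norm_num : (0 : ℝ) < (2 : ℝ)⁻¹)]
    have := (norm_sub_le (Dmap f x y) (Dmap f (-x) (-y))).trans
      (add_le_add (hD x y) (hD (-x) (-y)))
    calc (2 : ℝ)⁻¹ * ‖Dmap f x y - Dmap f (-x) (-y)‖
        ≤ (2 : ℝ)⁻¹ * (ψ x y + ψ (-x) (-y)) := mul_le_mul_of_nonneg_left this (by norm_num)
      _ = (ψ x y + ψ (-x) (-y)) / 2 := by ring
  -- the scaled ψ bound tends to 0
  have hb0 : ∀ x y : X, Tendsto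
      (fun n : ℕ => (ψ ((2 : ℝ) ^ n • x) ((2 : ℝ) ^ n • y)
        + ψ (-((2 : ℝ) ^ n • x)) (-((2 : ℝ) ^ n • y))) / 2 / 2 ^ n) atTop (𝓝 0) := by
    intro x y
    have hlimneg : Tendsto (fun n : ℕ =>
        ψ (-((2 : ℝ) ^ n • x)) (-((2 : ℝ) ^ n • y)) / 2 ^ n) atTop (𝓝 0) := by
      refine (hlim (-x) (-y)).congr fun n => ?_
      rw [smul_neg, smul_neg]
    have h := ((hlim x y).add hlimneg).div_const 2
    rw [add_zero, zero_div] at h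
    exact h.congr fun n => by ring
  have hbnn : ∀ (x y : X) (n : ℕ), 0 ≤ (ψ ((2 : ℝ) ^ n • x) ((2 : ℝ) ^ n • y)
      + ψ (-((2 : ℝ) ^ n • x)) (-((2 : ℝ) ^ n • y))) / 2 := by
    intro x y n
    have := hψ ((2 : ℝ) ^ n • x) ((2 : ℝ) ^ n • y)
    have := hψ (-((2 : ℝ) ^ n • x)) (-((2 : ℝ) ^ n • y))
    positivity
  -- Dmap vanishes on Q and A
  have hDQ : ∀ x y : X, Dmap Q x y = 0 := by
    intro x y
    exact dmap_limit ge Q 16 (by norm_num) hQlim x y _ (hbnn x y) (fun n => hDg _ _) (hb0 x y)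
  have hDA : ∀ x y : X, Dmap A x y = 0 := by
    intro x y
    exact dmap_limit ho A 2 le_rfl hAlim x y _ (hbnn x y) (fun n => hDh _ _) (hb0 x y)
  -- Q is quartic
  have hQuart : IsQuartic Q := quarticOfD Q hDQ hQeven hQ0
  -- A is additive
  have hA2 : ∀ y : X, A ((2 : ℝ) • y) = (2 : ℝ) • A y := by
    intro y
    have key : A ((2 : ℝ) • y) - (2 : ℝ) • A y = (3 : ℝ)⁻¹ • Dmap A 0 y := by
      simp only [Dmap]
      rw [show (2 : ℝ) • (0 : X) + y = y by module, show (2 : ℝ) • (0 : X) - y = -y by module,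
          show (0 : X) + y = y by module, show (0 : X) - y = -y by module,
          show (2 : ℝ) • (0 : X) = (0 : X) by module, hAodd y, hA0]
      module
    rw [hDA 0 y, smul_zero] at key
    exact sub_eq_zero.mp key
  have hE : ∀ u v : X, A ((2 : ℝ) • u + v) + A ((2 : ℝ) • u - v)
      = (4 : ℝ) • A (u + v) + (4 : ℝ) • A (u - v) - (4 : ℝ) • A u := by
    intro u v
    have key : (A ((2 : ℝ) • u + v) + A ((2 : ℝ) • u - v))
        - ((4 : ℝ) • A (u + v) + (4 : ℝ) • A (u - v) - (4 : ℝ) • A u)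
        = (7 : ℝ)⁻¹ • Dmap A u v := by
      simp only [Dmap]
      rw [hA2 u, hA2 v]
      module
    rw [hDA u v, smul_zero] at key
    exact sub_eq_zero.mp key
  have hAadd : ∀ x y : X, A (x + y) = A x + A y := fun x y => addOfE A hE hAodd x y
  -- summability of the target bound
  have hFsum : ∀ z : X, Summable (fun j : ℕ =>
      (ψ 0 ((2 : ℝ) ^ j • z) + ψ 0 (-((2 : ℝ) ^ j • z))) / 2 ^ j) := by
    intro z
    refine ((hsum z).add (hsumneg z)).congr fun j => ?_
    ring
  have htsummand : ∀ z : X, Summable (fun i : ℕ =>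
      (ψ 0 ((2 : ℝ) ^ i • z) + ψ 0 (-((2 : ℝ) ^ i • z))) / (2 * 16 ^ i)
        + 12 * (ψ 0 ((2 : ℝ) ^ i • z) + ψ 0 (-((2 : ℝ) ^ i • z))) / 2 ^ i) := by
    intro z
    have s1 : Summable (fun i : ℕ =>
        (ψ 0 ((2 : ℝ) ^ i • z) + ψ 0 (-((2 : ℝ) ^ i • z))) / (2 * 16 ^ i)) := by
      refine Summable.of_nonneg_of_le
        (fun i => div_nonneg (add_nonneg (hψ _ _) (hψ _ _)) (by positivity))
        (fun i => ?_) (hFsum z)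
      have h1 : (2 : ℝ) ^ i ≤ 2 * 16 ^ i := by
        have := pow_le_pow_left₀ (by norm_num : (0 : ℝ) ≤ 2) (by norm_num : (2 : ℝ) ≤ 16) i
        nlinarith [pow_pos (by norm_num : (0 : ℝ) < 16) i]
      rw [div_le_div_iff₀ (by positivity) (by positivity)]
      exact mul_le_mul_of_nonneg_left h1 (add_nonneg (hψ _ _) (hψ _ _))
    have s2 : Summable (fun i : ℕ =>
        12 * (ψ 0 ((2 : ℝ) ^ i • z) + ψ 0 (-((2 : ℝ) ^ i • z))) / 2 ^ i) :=
      ((hFsum z).mul_left 12).congr fun i => by ring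
    exact s1.add s2
  -- the error bound
  have hbnd : ∀ x : X, ‖f x - Q x - A x‖ ≤ (1 / 48) * ∑' i : ℕ,
      ((ψ 0 ((2 : ℝ) ^ i • x) + ψ 0 (-((2 : ℝ) ^ i • x))) / (2 * 16 ^ i) +
        12 * (ψ 0 ((2 : ℝ) ^ i • x) + ψ 0 (-((2 : ℝ) ^ i • x))) / 2 ^ i) := by
    intro x
    have hsplit : f x - Q x - A x = (ge x - Q x) + (ho x - A x) := by
      simp only [hgdef, hhdef]
      module
    rw [hsplit]
    have step1 : ‖(ge x - Q x) + (ho x - A x)‖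
        ≤ (∑' i : ℕ, φ ((2 : ℝ) ^ i • x) / 16 ^ i) / 16
          + (∑' i : ℕ, φ ((2 : ℝ) ^ i • x) / 2 ^ i) / 2 :=
      (norm_add_le _ _).trans (add_le_add (hQbd x) (hAbd x))
    refine step1.trans ?_
    have e2 : (∑' i : ℕ, φ ((2 : ℝ) ^ i • x) / 16 ^ i) / 16
        + (∑' i : ℕ, φ ((2 : ℝ) ^ i • x) / 2 ^ i) / 2
        = ∑' i : ℕ, (φ ((2 : ℝ) ^ i • x) / 16 ^ i / 16 + φ ((2 : ℝ) ^ i • x) / 2 ^ i / 2) := by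
      rw [← tsum_div_const, ← tsum_div_const,
        Summable.tsum_add ((hφ16 x).div_const 16) ((hφ2 x).div_const 2)]
    rw [e2, ← tsum_mul_left]
    refine Summable.tsum_le_tsum (fun i => ?_) (((hφ16 x).div_const 16).add ((hφ2 x).div_const 2))
      ((htsummand x).mul_left (1 / 48))
    simp only [hφdef]
    have ha : 0 ≤ ψ 0 ((2 : ℝ) ^ i • x) + ψ 0 (-((2 : ℝ) ^ i • x)) :=
      add_nonneg (hψ _ _) (hψ _ _)
    have h2pos : (0 : ℝ) < 2 ^ i := by positivity
    have h16pos : (0 : ℝ) < 16 ^ i := by positivity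
    have p1 : (ψ 0 ((2 : ℝ) ^ i • x) + ψ 0 (-((2 : ℝ) ^ i • x))) / 6 / 16 ^ i / 16
        = 1 / 48 * ((ψ 0 ((2 : ℝ) ^ i • x) + ψ 0 (-((2 : ℝ) ^ i • x))) / (2 * 16 ^ i)) := by
      ring
    have p2 : (ψ 0 ((2 : ℝ) ^ i • x) + ψ 0 (-((2 : ℝ) ^ i • x))) / 6 / 2 ^ i / 2
        ≤ 1 / 48 * (12 * (ψ 0 ((2 : ℝ) ^ i • x) + ψ 0 (-((2 : ℝ) ^ i • x))) / 2 ^ i) := by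
      rw [show (ψ 0 ((2 : ℝ) ^ i • x) + ψ 0 (-((2 : ℝ) ^ i • x))) / 6 / 2 ^ i / 2
          = (ψ 0 ((2 : ℝ) ^ i • x) + ψ 0 (-((2 : ℝ) ^ i • x))) / (12 * 2 ^ i) by ring,
        show 1 / 48 * (12 * (ψ 0 ((2 : ℝ) ^ i • x) + ψ 0 (-((2 : ℝ) ^ i • x))) / 2 ^ i)
          = (ψ 0 ((2 : ℝ) ^ i • x) + ψ 0 (-((2 : ℝ) ^ i • x))) / (4 * 2 ^ i) by ring,
        div_le_div_iff₀ (by positivity) (by positivity)]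
      nlinarith [mul_nonneg ha h2pos.le]
    calc (ψ 0 ((2 : ℝ) ^ i • x) + ψ 0 (-((2 : ℝ) ^ i • x))) / 6 / 16 ^ i / 16
          + (ψ 0 ((2 : ℝ) ^ i • x) + ψ 0 (-((2 : ℝ) ^ i • x))) / 6 / 2 ^ i / 2
        ≤ 1 / 48 * ((ψ 0 ((2 : ℝ) ^ i • x) + ψ 0 (-((2 : ℝ) ^ i • x))) / (2 * 16 ^ i))
          + 1 / 48 * (12 * (ψ 0 ((2 : ℝ) ^ i • x) + ψ 0 (-((2 : ℝ) ^ i • x))) / 2 ^ i) :=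
          add_le_add p1.le p2
      _ = 1 / 48 * ((ψ 0 ((2 : ℝ) ^ i • x) + ψ 0 (-((2 : ℝ) ^ i • x))) / (2 * 16 ^ i)
          + 12 * (ψ 0 ((2 : ℝ) ^ i • x) + ψ 0 (-((2 : ℝ) ^ i • x))) / 2 ^ i) := by ring
  -- the tail of the bound, scaled, tends to zero
  have hKtail : ∀ z : X, Tendsto (fun n : ℕ => ((1 / 48) * ∑' i : ℕ,
      ((ψ 0 ((2 : ℝ) ^ i • ((2 : ℝ) ^ n • z)) + ψ 0 (-((2 : ℝ) ^ i • ((2 : ℝ) ^ n • z)))) / (2 * 16 ^ i) +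
        12 * (ψ 0 ((2 : ℝ) ^ i • ((2 : ℝ) ^ n • z)) + ψ 0 (-((2 : ℝ) ^ i • ((2 : ℝ) ^ n • z)))) / 2 ^ i)) / 2 ^ n)
      atTop (𝓝 0) := by
    intro z
    have hG : Tendsto (fun n : ℕ => ∑' k : ℕ,
        (ψ 0 ((2 : ℝ) ^ (k + n) • z) + ψ 0 (-((2 : ℝ) ^ (k + n) • z))) / 2 ^ (k + n))
        atTop (𝓝 0) := by
      exact tendsto_sum_nat_add
        (fun j : ℕ => (ψ 0 ((2 : ℝ) ^ j • z) + ψ 0 (-((2 : ℝ) ^ j • z))) / 2 ^ j)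
    have hG' : Tendsto (fun n : ℕ => (13 / 48 : ℝ) * ∑' k : ℕ,
        (ψ 0 ((2 : ℝ) ^ (k + n) • z) + ψ 0 (-((2 : ℝ) ^ (k + n) • z))) / 2 ^ (k + n))
        atTop (𝓝 0) := by
      have := hG.const_mul (13 / 48 : ℝ)
      rwa [mul_zero] at this
    refine squeeze_zero (fun n => ?_) (fun n => ?_) hG'
    · apply div_nonneg _ (by positivity)
      apply mul_nonneg (by norm_num)
      refine tsum_nonneg fun i => ?_
      have := hψ 0 ((2 : ℝ) ^ i • ((2 : ℝ) ^ n • z))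
      have := hψ 0 (-((2 : ℝ) ^ i • ((2 : ℝ) ^ n • z)))
      positivity
    · have harg : ∀ i : ℕ, (2 : ℝ) ^ i • ((2 : ℝ) ^ n • z) = (2 : ℝ) ^ (i + n) • z := by
        intro i
        rw [smul_smul, ← pow_add]
      have e1 : ((1 / 48 : ℝ) * ∑' i : ℕ,
          ((ψ 0 ((2 : ℝ) ^ i • ((2 : ℝ) ^ n • z)) + ψ 0 (-((2 : ℝ) ^ i • ((2 : ℝ) ^ n • z)))) / (2 * 16 ^ i) +
            12 * (ψ 0 ((2 : ℝ) ^ i • ((2 : ℝ) ^ n • z)) + ψ 0 (-((2 : ℝ) ^ i • ((2 : ℝ) ^ n • z)))) / 2 ^ i)) / 2 ^ n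
          = ∑' i : ℕ, (1 / 48 : ℝ) *
          ((ψ 0 ((2 : ℝ) ^ (i + n) • z) + ψ 0 (-((2 : ℝ) ^ (i + n) • z))) / (2 * 16 ^ i) +
            12 * (ψ 0 ((2 : ℝ) ^ (i + n) • z) + ψ 0 (-((2 : ℝ) ^ (i + n) • z))) / 2 ^ i) / 2 ^ n := by
        simp only [harg]
        rw [tsum_div_const, tsum_mul_left]
      rw [e1]
      have hsl : Summable (fun i : ℕ => (1 / 48 : ℝ) *
          ((ψ 0 ((2 : ℝ) ^ (i + n) • z) + ψ 0 (-((2 : ℝ) ^ (i + n) • z))) / (2 * 16 ^ i) +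
            12 * (ψ 0 ((2 : ℝ) ^ (i + n) • z) + ψ 0 (-((2 : ℝ) ^ (i + n) • z))) / 2 ^ i) / 2 ^ n) := by
      -- summable: massage htsummand at point 2^n • z
        refine (((htsummand ((2 : ℝ) ^ n • z)).mul_left (1 / 48)).div_const (2 ^ n)).congr fun i => ?_
        simp only [harg]
      have hsr : Summable (fun i : ℕ => (13 / 48 : ℝ) *
          ((ψ 0 ((2 : ℝ) ^ (i + n) • z) + ψ 0 (-((2 : ℝ) ^ (i + n) • z))) / 2 ^ (i + n))) := by
        refine Summable.mul_left _ ?_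
        exact (summable_nat_add_iff n).mpr (hFsum z)
      have hterm : ∀ i : ℕ, (1 / 48 : ℝ) *
          ((ψ 0 ((2 : ℝ) ^ (i + n) • z) + ψ 0 (-((2 : ℝ) ^ (i + n) • z))) / (2 * 16 ^ i) +
            12 * (ψ 0 ((2 : ℝ) ^ (i + n) • z) + ψ 0 (-((2 : ℝ) ^ (i + n) • z))) / 2 ^ i) / 2 ^ n
          ≤ (13 / 48 : ℝ) *
          ((ψ 0 ((2 : ℝ) ^ (i + n) • z) + ψ 0 (-((2 : ℝ) ^ (i + n) • z))) / 2 ^ (i + n)) := by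
        intro i
        have ha : 0 ≤ ψ 0 ((2 : ℝ) ^ (i + n) • z) + ψ 0 (-((2 : ℝ) ^ (i + n) • z)) :=
          add_nonneg (hψ _ _) (hψ _ _)
        have h1 : (ψ 0 ((2 : ℝ) ^ (i + n) • z) + ψ 0 (-((2 : ℝ) ^ (i + n) • z))) / (2 * 16 ^ i)
            ≤ (ψ 0 ((2 : ℝ) ^ (i + n) • z) + ψ 0 (-((2 : ℝ) ^ (i + n) • z))) / 2 ^ i := by
          rw [div_le_div_iff₀ (by positivity) (by positivity)]
          have h2 : (2 : ℝ) ^ i ≤ 2 * 16 ^ i := by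
            have := pow_le_pow_left₀ (by norm_num : (0 : ℝ) ≤ 2) (by norm_num : (2 : ℝ) ≤ 16) i
            nlinarith [pow_pos (by norm_num : (0 : ℝ) < 16) i]
          exact mul_le_mul_of_nonneg_left h2 ha
        calc (1 / 48 : ℝ) *
            ((ψ 0 ((2 : ℝ) ^ (i + n) • z) + ψ 0 (-((2 : ℝ) ^ (i + n) • z))) / (2 * 16 ^ i) +
              12 * (ψ 0 ((2 : ℝ) ^ (i + n) • z) + ψ 0 (-((2 : ℝ) ^ (i + n) • z))) / 2 ^ i) / 2 ^ n
            ≤ (1 / 48 : ℝ) *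
            ((ψ 0 ((2 : ℝ) ^ (i + n) • z) + ψ 0 (-((2 : ℝ) ^ (i + n) • z))) / 2 ^ i +
              12 * (ψ 0 ((2 : ℝ) ^ (i + n) • z) + ψ 0 (-((2 : ℝ) ^ (i + n) • z))) / 2 ^ i) / 2 ^ n := by
              gcongr
          _ = (13 / 48 : ℝ) *
            ((ψ 0 ((2 : ℝ) ^ (i + n) • z) + ψ 0 (-((2 : ℝ) ^ (i + n) • z))) / 2 ^ (i + n)) := by
              rw [pow_add]; ring
      rw [← tsum_mul_left]
      exact Summable.tsum_le_tsum hterm hsl hsr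
  -- assemble
  refine ⟨Q, A, hQuart, hAadd, fun x => hbnd x, ?_⟩
  intro Q' A' hQ'q hA'a hb2
  exact uniq_half f Q A Q' A'
    (fun z => (1 / 48) * ∑' i : ℕ,
      ((ψ 0 ((2 : ℝ) ^ i • z) + ψ 0 (-((2 : ℝ) ^ i • z))) / (2 * 16 ^ i) +
        12 * (ψ 0 ((2 : ℝ) ^ i • z) + ψ 0 (-((2 : ℝ) ^ i • z))) / 2 ^ i))
    (quartic_scale Q hQuart) (quartic_scale Q' hQ'q)
    (additive_scale A hAadd) (additive_scale A' hA'a)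
    hKtail hbnd hb2
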